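/- arXiv:2207.13160 — 2 statements merged into one kernel-verified Lean document; each statement's English description precedes it below -/
import Mathlib

section
/- Let p₁, q₁, p₂, q₂ be one-variable polynomials over ℂ such that every root of q₁ and of q₂ lies in the open unit disc {z : |z| < 1}, the degree of pᵢ is at most the degree of qᵢ for i = 1, 2, and suppose p₁(z)/q₁(z) + conj(p₂(z)/q₂(z)) = 0 for every z with |z| = 1. Then there exists a constant c ∈ ℂ such that p₁(z)/q₁(z) = c and p₂(z)/q₂(z) = -conj(c) for every z with |z| = 1. Consequently, the 'poles inside' decomposition of a rational function of z and z̄ on the unit circle is unique up to an additive constant. -/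
/-!
On the unit circle `conj z = z⁻¹`, so `conj (p₂ z / q₂ z) = P z / Q z`, where `P` and `Q` are the
reflections `zᴺ · conj (f (conj z)⁻¹)` of `p₂` and `q₂` with `N = deg q₂`. The hypothesis then
becomes the polynomial identity `p₁ Q + P q₁ = 0`, valid on the infinite set `‖z‖ = 1` and hence
everywhere. The roots of `Q` lie outside the closed disc, those of `q₁` inside, so `q₁` and `Q`
are coprime and `q₁ ∣ p₁`; the degree bound makes the quotient a constant `c`.
-/

open ComplexConjugate Polynomial

lemma Complex.setOf_norm_eq_one_infinite : {z : ℂ | ‖z‖ = 1}.Infinite := by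
  have hsphere := (isPreconnected_sphere (by simp) (0 : ℂ) 1).infinite_of_nontrivial
    ⟨1, by simp, -1, by simp, by norm_num⟩
  simpa only [Metric.sphere, dist_zero_right] using hsphere

lemma Polynomial.exists_eq_C_mul_of_dvd_of_degree_le {R : Type*} [CommSemiring R]
    [NoZeroDivisors R] {p q : R[X]} (hq : q ≠ 0) (hdvd : q ∣ p) (hd : p.degree ≤ q.degree) :
    ∃ c, p = C c * q := by
  obtain ⟨s, rfl⟩ := hdvd
  have hs : s.degree ≤ 0 := by
    rw [degree_mul] at hd
    exact (WithBot.add_le_add_iff_left (degree_ne_bot.mpr hq)).mp (by simpa using hd)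
  exact ⟨s.coeff 0, by rw [mul_comm, ← eq_C_of_degree_le_zero hs]⟩

lemma Polynomial.ne_zero_of_eval_eq_zero_imp_norm_lt_one {f : ℂ[X]}
    (hf : ∀ z, f.eval z = 0 → ‖z‖ < 1) : f ≠ 0 := by
  rintro rfl
  simpa using hf 1 eval_zero

noncomputable def conjReflect (N : ℕ) (f : ℂ[X]) : ℂ[X] :=
  reflect N (f.map (starRingEnd ℂ))

lemma eval_conjReflect {N : ℕ} {f : ℂ[X]} (hf : f.natDegree ≤ N) {z : ℂ} (hz : z ≠ 0) :
    (conjReflect N f).eval z = z ^ N * conj (f.eval (conj z)⁻¹) := by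
  let := invertibleOfNonzero (inv_ne_zero hz)
  have h := eval₂_reflect_mul_pow (RingHom.id ℂ) z⁻¹ N (f.map (starRingEnd ℂ))
    (by rwa [natDegree_map])
  have hmap : (f.map (starRingEnd ℂ)).eval z⁻¹ = conj (f.eval (conj z)⁻¹) := by
    rw [eval_map, ← eval₂_at_apply, map_inv₀, Complex.conj_conj]
  rw [invOf_eq_inv, inv_inv, eval₂_id, eval₂_id, hmap] at h
  rw [conjReflect, ← h, mul_left_comm, inv_pow, mul_inv_cancel₀ (pow_ne_zero N hz), mul_one]

lemma eval_conjReflect_of_norm_eq_one {N : ℕ} {f : ℂ[X]} (hf : f.natDegree ≤ N) {z : ℂ}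
    (hz : ‖z‖ = 1) : (conjReflect N f).eval z = z ^ N * conj (f.eval z) := by
  rw [eval_conjReflect hf (norm_ne_zero_iff.mp (hz ▸ one_ne_zero)), ← Complex.inv_eq_conj hz,
    inv_inv]

lemma one_lt_norm_of_eval_conjReflect_eq_zero {f : ℂ[X]} (hf : ∀ z, f.eval z = 0 → ‖z‖ < 1)
    {a : ℂ} (ha : (conjReflect f.natDegree f).eval a = 0) : 1 < ‖a‖ := by
  have ha₀ : a ≠ 0 := by
    rintro rfl
    rw [← coeff_zero_eq_eval_zero, conjReflect, coeff_reflect, revAt_le (Nat.zero_le _),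
      Nat.sub_zero, coeff_map, map_eq_zero] at ha
    exact ne_zero_of_eval_eq_zero_imp_norm_lt_one hf (leadingCoeff_eq_zero.mp ha)
  rw [eval_conjReflect le_rfl ha₀, mul_eq_zero, map_eq_zero] at ha
  have hroot := hf _ (ha.resolve_left (pow_ne_zero _ ha₀))
  rwa [norm_inv, Complex.norm_conj, inv_lt_one₀ (norm_pos_iff.mpr ha₀)] at hroot

lemma mul_conjReflect_add_conjReflect_mul_eq_zero {p₁ q₁ p₂ q₂ : ℂ[X]} {N : ℕ}
    (hp₂ : p₂.natDegree ≤ N) (hq₂ : q₂.natDegree ≤ N)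
    (hq₁z : ∀ z : ℂ, ‖z‖ = 1 → q₁.eval z ≠ 0) (hq₂z : ∀ z : ℂ, ‖z‖ = 1 → q₂.eval z ≠ 0)
    (hsum : ∀ z : ℂ, ‖z‖ = 1 → p₁.eval z / q₁.eval z + conj (p₂.eval z / q₂.eval z) = 0) :
    p₁ * conjReflect N q₂ + conjReflect N p₂ * q₁ = 0 := by
  refine eq_zero_of_infinite_isRoot _ (Complex.setOf_norm_eq_one_infinite.mono fun z hz => ?_)
  have hz : ‖z‖ = 1 := hz
  have hq₁ := hq₁z z hz
  have hq₂c : conj (q₂.eval z) ≠ 0 := (_root_.map_ne_zero _).mpr (hq₂z z hz)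
  have hs := hsum z hz
  rw [map_div₀] at hs
  field_simp at hs
  simp only [Set.mem_ofPred_eq, IsRoot.def, eval_add, eval_mul, eval_conjReflect_of_norm_eq_one hp₂ hz,
    eval_conjReflect_of_norm_eq_one hq₂ hz]
  linear_combination z ^ N * hs

lemma isCoprime_of_roots_norm_lt_one_of_roots_one_lt_norm {f g : ℂ[X]}
    (hf : ∀ z, f.eval z = 0 → ‖z‖ < 1) (hg : ∀ z, g.eval z = 0 → 1 < ‖z‖) : IsCoprime f g := by
  rw [isCoprime_iff_aeval_ne_zero_of_isAlgClosed ℂ ℂ]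
  intro a
  simp only [coe_aeval_eq_eval, ← not_and_or]
  exact fun ⟨hfa, hga⟩ => (hf a hfa).not_gt (hg a hga)

/-- Uniqueness (up to an additive constant) of the "poles inside" decomposition:
if `p₁/q₁ + conj (p₂/q₂)` vanishes on the unit circle, where all roots of `q₁` and `q₂`
lie in the open unit disc and `deg pᵢ ≤ deg qᵢ`, then `p₁/q₁` is a constant `c` and
`p₂/q₂` is the constant `-conj c` on the unit circle. -/
theorem poles_inside_decomposition_unique
    (p₁ q₁ p₂ q₂ : Polynomial ℂ)
    (h₁ : ∀ z : ℂ, q₁.eval z = 0 → ‖z‖ < 1)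
    (h₂ : ∀ z : ℂ, q₂.eval z = 0 → ‖z‖ < 1)
    (hd₁ : p₁.degree ≤ q₁.degree) (hd₂ : p₂.degree ≤ q₂.degree)
    (hsum : ∀ z : ℂ, ‖z‖ = 1 →
      p₁.eval z / q₁.eval z + conj (p₂.eval z / q₂.eval z) = 0) :
    ∃ c : ℂ, ∀ z : ℂ, ‖z‖ = 1 →
      p₁.eval z / q₁.eval z = c ∧ p₂.eval z / q₂.eval z = -conj c := by
  have hq₁z : ∀ z : ℂ, ‖z‖ = 1 → q₁.eval z ≠ 0 := fun z hz h0 => (h₁ z h0).ne hz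
  have hq₂z : ∀ z : ℂ, ‖z‖ = 1 → q₂.eval z ≠ 0 := fun z hz h0 => (h₂ z h0).ne hz
  have hR := mul_conjReflect_add_conjReflect_mul_eq_zero (natDegree_le_natDegree hd₂) le_rfl
    hq₁z hq₂z hsum
  have hcop : IsCoprime q₁ (conjReflect q₂.natDegree q₂) :=
    isCoprime_of_roots_norm_lt_one_of_roots_one_lt_norm h₁
      fun _ => one_lt_norm_of_eval_conjReflect_eq_zero h₂
  have hdvd : q₁ ∣ p₁ :=
    hcop.dvd_of_dvd_mul_right ⟨-conjReflect q₂.natDegree p₂, by linear_combination hR⟩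
  obtain ⟨c, hc⟩ :=
    exists_eq_C_mul_of_dvd_of_degree_le (ne_zero_of_eval_eq_zero_imp_norm_lt_one h₁) hdvd hd₁
  refine ⟨c, fun z hz => ?_⟩
  have hc₁ : p₁.eval z / q₁.eval z = c := by
    rw [hc, eval_mul, eval_C, mul_div_cancel_right₀ _ (hq₁z z hz)]
  refine ⟨hc₁, ?_⟩
  have hs := hsum z hz
  rw [hc₁] at hs
  rw [← Complex.conj_conj (p₂.eval z / q₂.eval z), eq_neg_of_add_eq_zero_right hs, map_neg]
end

section
/- Let P and Q be polynomials in two variables over ℂ such that Q(z, conj z) ≠ 0 for every z with |z| = 1. Then the Dirichlet problem on the unit disc with boundary data P(z, conj z)/Q(z, conj z) has an explicit solution of rational form: there exist one-variable polynomials p₁, q₁, p₂, q₂ over ℂ with q₁ and q₂ nonvanishing on the closed unit disc, such that the function u(z) := p₁(z)/q₁(z) + conj(p₂(z)/q₂(z)) is continuous on the closed unit disc, is harmonic on the open unit disc (its real and imaginary parts are twice continuously differentiable with vanishing Laplacian there), and satisfies u(z) = P(z, conj z)/Q(z, conj z) for every z with |z| = 1. -/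
/-!
Substituting `z̄ = z⁻¹` on the circle turns the boundary data into a rational function `N/M` of
`z` with `M` zero-free on the circle. Split `M = M_in * M_out` into the factors with roots inside
and outside the disc; by Bézout and division with remainder,
`N/M = (holomorphic on the closed disc) + T/M_in` with `deg T ≤ deg M_in`. On the circle, with
`d = deg M_in`, `T(z)/M_in(z) = conj (T*(z)/M_in*(z))` where `f*(w) := w^d conj (f (1/w̄))`, and
`M_in*` has no zeros in the closed disc because the roots of `M_in` lie in the open disc. The sum
of a holomorphic and an antiholomorphic function is harmonic.
-/

open ComplexConjugate

/-- The Laplacian of a real-valued function on `ℂ ≃ ℝ²` at a point: the sum of the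
second derivatives in the directions `1` and `I`. -/
noncomputable def laplacianAt (v : ℂ → ℝ) (z : ℂ) : ℝ :=
  fderiv ℝ (fun w => fderiv ℝ v w 1) z 1
    + fderiv ℝ (fun w => fderiv ℝ v w Complex.I) z Complex.I

/-- A real-valued function is harmonic on an open set if it is `C²` there with
identically vanishing Laplacian. -/
def HarmonicOnSet (v : ℂ → ℝ) (s : Set ℂ) : Prop :=
  ContDiffOn ℝ 2 v s ∧ ∀ z ∈ s, laplacianAt v z = 0

open Polynomial InnerProductSpace Laplacian

theorem exists_eval_inv_eq_div_pow {K : Type*} [Field K] (F : MvPolynomial (Fin 2) K) :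
    ∃ (n : ℕ) (f : K[X]), ∀ z : K, z ≠ 0 →
      MvPolynomial.eval ![z, z⁻¹] F = f.eval z / z ^ n := by
  induction F using MvPolynomial.induction_on with
  | C c => exact ⟨0, C c, fun z _ => by simp⟩
  | add F G hF hG =>
    obtain ⟨n, f, hf⟩ := hF
    obtain ⟨m, g, hg⟩ := hG
    refine ⟨n + m, f * X ^ m + g * X ^ n, fun z hz => ?_⟩
    simp only [map_add, hf z hz, hg z hz, eval_add, eval_mul, eval_pow, eval_X]
    field_simp
    ring
  | mul_X F i hF =>
    obtain ⟨n, f, hf⟩ := hF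
    fin_cases i
    · refine ⟨n, f * X, fun z hz => ?_⟩
      simp [hf z hz, div_mul_eq_mul_div]
    · refine ⟨n + 1, f, fun z hz => ?_⟩
      simp [hf z hz, pow_succ, ← div_div, div_eq_mul_inv _ z]

theorem exists_eval_inv_div_eq {K : Type*} [Field K] (P Q : MvPolynomial (Fin 2) K) :
    ∃ N M : K[X], ∀ z : K, z ≠ 0 →
      (M.eval z = 0 ↔ MvPolynomial.eval ![z, z⁻¹] Q = 0) ∧
      MvPolynomial.eval ![z, z⁻¹] P / MvPolynomial.eval ![z, z⁻¹] Q = N.eval z / M.eval z := by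
  obtain ⟨n, f, hf⟩ := exists_eval_inv_eq_div_pow P
  obtain ⟨m, g, hg⟩ := exists_eval_inv_eq_div_pow Q
  refine ⟨f * X ^ m, g * X ^ n, fun z hz => ⟨?_, ?_⟩⟩
  · simp [hg z hz, hz]
  · simp only [hf z hz, hg z hz, div_div_div_eq, eval_mul, eval_pow, eval_X, mul_comm (z ^ n)]

theorem Polynomial.exists_monic_mul_of_roots_mem {K : Type*} [Field K] [IsAlgClosed K]
    {p : K[X]} (hp : p ≠ 0) (s : Set K) :
    ∃ a b : K[X], p = a * b ∧ a.Monic ∧ (∀ z, a.IsRoot z → z ∈ s) ∧ ∀ z ∈ s, ¬ b.IsRoot z := by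
  classical
  have hmonic (t : Multiset K) : (t.map (X - C ·)).prod.Monic :=
    monic_multiset_prod_of_monic _ _ fun a _ => monic_X_sub_C a
  have hlc : p.leadingCoeff ≠ 0 := leadingCoeff_ne_zero.2 hp
  have hprod : C p.leadingCoeff * (p.roots.map (X - C ·)).prod = p :=
    C_leadingCoeff_mul_prod_multiset_X_sub_C IsAlgClosed.card_roots_eq_natDegree
  refine ⟨((p.roots.filter (· ∈ s)).map (X - C ·)).prod,
    C p.leadingCoeff * ((p.roots.filter (· ∉ s)).map (X - C ·)).prod, ?_, hmonic _, ?_, ?_⟩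
  · rw [mul_left_comm, ← Multiset.prod_add, ← Multiset.map_add, Multiset.filter_add_not, hprod]
  · intro z hz
    have hmem := (mem_roots (hmonic _).ne_zero).2 hz
    rw [roots_multiset_prod_X_sub_C] at hmem
    exact (Multiset.mem_filter.1 hmem).2
  · intro z hz hroot
    have hmem := (mem_roots (mul_ne_zero (C_ne_zero.2 hlc) (hmonic _).ne_zero)).2 hroot
    rw [roots_C_mul _ hlc, roots_multiset_prod_X_sub_C] at hmem
    exact (Multiset.mem_filter.1 hmem).2 hz

theorem Polynomial.eval_reflect_inv_mul_pow {K : Type*} [Field K] {p : K[X]} {N : ℕ}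
    (hp : p.natDegree ≤ N) {z : K} (hz : z ≠ 0) : (reflect N p).eval z⁻¹ * z ^ N = p.eval z := by
  let := invertibleOfNonzero hz
  simpa [eval₂_eq_eval_map] using eval₂_reflect_mul_pow (RingHom.id K) z N p hp

theorem Polynomial.conj_eval_map_conj (p : ℂ[X]) (z : ℂ) :
    conj ((p.map (starRingEnd ℂ)).eval z) = p.eval (conj z) := by
  rw [← eval_map_apply, map_map]
  congr
  ext
  simp

theorem Polynomial.div_eq_conj_reflect_div {T M : ℂ[X]} (hT : T.natDegree ≤ M.natDegree) {z : ℂ}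
    (hz : ‖z‖ = 1) :
    T.eval z / M.eval z = conj (((reflect M.natDegree T).map (starRingEnd ℂ)).eval z /
      (M.reverse.map (starRingEnd ℂ)).eval z) := by
  have hz0 : z ≠ 0 := by rintro rfl; simp at hz
  rw [map_div₀, conj_eval_map_conj, conj_eval_map_conj, ← Complex.inv_eq_conj hz,
    ← eval_reflect_inv_mul_pow hT hz0, ← eval_reflect_inv_mul_pow le_rfl hz0,
    mul_div_mul_right _ _ (pow_ne_zero _ hz0), reverse]

theorem Polynomial.eval_map_conj_reverse_ne_zero {M : ℂ[X]} (hM : M ≠ 0)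
    (hroots : ∀ z, M.IsRoot z → ‖z‖ < 1) {w : ℂ} (hw : ‖w‖ ≤ 1) :
    (M.reverse.map (starRingEnd ℂ)).eval w ≠ 0 := by
  rw [Ne, ← map_eq_zero (starRingEnd ℂ), conj_eval_map_conj]
  rw [← Complex.norm_conj] at hw
  generalize conj w = u at hw
  rcases eq_or_ne u 0 with rfl | hu
  · rw [← coeff_zero_eq_eval_zero, coeff_zero_reverse]
    exact leadingCoeff_ne_zero.2 hM
  · intro hrev
    have hroot : M.IsRoot u⁻¹ := by
      rw [IsRoot, ← eval_reflect_inv_mul_pow le_rfl (inv_ne_zero hu), inv_inv]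
      exact mul_eq_zero_of_left hrev _
    have hlt := hroots _ hroot
    rw [norm_inv, inv_lt_one₀ (norm_pos_iff.2 hu)] at hlt
    exact hlt.not_ge hw

theorem Polynomial.exists_div_add_conj_div_eq_on_circle {N M : ℂ[X]}
    (hM : ∀ z : ℂ, ‖z‖ = 1 → M.eval z ≠ 0) :
    ∃ p₁ q₁ p₂ q₂ : ℂ[X], (∀ z : ℂ, ‖z‖ ≤ 1 → q₁.eval z ≠ 0 ∧ q₂.eval z ≠ 0) ∧
      ∀ z : ℂ, ‖z‖ = 1 →
        p₁.eval z / q₁.eval z + conj (p₂.eval z / q₂.eval z) = N.eval z / M.eval z := by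
  have hM0 : M ≠ 0 := by rintro rfl; exact hM 1 (by simp) eval_zero
  obtain ⟨Min, Mout, rfl, hmon, hin, hout⟩ := exists_monic_mul_of_roots_mem hM0 {z : ℂ | ‖z‖ < 1}
  have hMout : ∀ z : ℂ, ‖z‖ ≤ 1 → Mout.eval z ≠ 0 := fun z hz =>
    hz.lt_or_eq.elim (hout z) fun h hroot => hM z h (by simp [hroot])
  obtain ⟨A, B, hAB⟩ : IsCoprime Min Mout :=
    (isCoprime_iff_aeval_ne_zero_of_isAlgClosed ℂ ℂ Min Mout).2 fun z =>
      or_iff_not_imp_left.2 fun hz => by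
        simpa using hMout z (hin z (by simpa using hz)).le
  obtain ⟨S, T, hDiv, hT⟩ : ∃ S T : ℂ[X], T + Min * S = N * B ∧ T.natDegree ≤ Min.natDegree :=
    ⟨_, _, modByMonic_add_div _ Min, natDegree_modByMonic_le _ hmon⟩
  refine ⟨N * A + S * Mout, Mout, (reflect Min.natDegree T).map (starRingEnd ℂ),
    Min.reverse.map (starRingEnd ℂ), fun z hz =>
      ⟨hMout z hz, eval_map_conj_reverse_ne_zero hmon.ne_zero hin hz⟩, fun z hz => ?_⟩
  rw [← div_eq_conj_reflect_div hT hz]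
  have hMin : Min.eval z ≠ 0 := fun h => (hin z h).ne hz
  have hBezout := congrArg (eval z) hAB
  replace hDiv := congrArg (eval z) hDiv
  simp only [eval_add, eval_mul, eval_one] at hBezout hDiv ⊢
  field_simp [hMout z hz.le]
  linear_combination eval z N * hBezout + eval z Mout * hDiv

theorem Polynomial.analyticOnNhd_eval_div_eval {𝕜 : Type*} [NontriviallyNormedField 𝕜]
    {p q : 𝕜[X]} {s : Set 𝕜} (hq : ∀ z ∈ s, q.eval z ≠ 0) :
    AnalyticOnNhd 𝕜 (fun z => p.eval z / q.eval z) s := fun z hz =>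
  (AnalyticOnNhd.eval_polynomial p z trivial).fun_div
    (AnalyticOnNhd.eval_polynomial q z trivial) (hq z hz)

theorem laplacianAt_eq_laplacian {v : ℂ → ℝ} {z : ℂ} (hv : ContDiffAt ℝ 2 v z) :
    laplacianAt v z = Δ v z := by
  have hdiff : DifferentiableAt ℝ (fderiv ℝ v) z :=
    (hv.fderiv_right (m := 1) (by norm_num)).differentiableAt (by norm_num)
  simp only [laplacianAt, laplacian_eq_iteratedFDeriv_complexPlane, iteratedFDeriv_two_apply,
    fderiv_clm_apply hdiff (differentiableAt_const _)]
  simp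

theorem InnerProductSpace.HarmonicOnNhd.harmonicOnSet {v : ℂ → ℝ} {s : Set ℂ}
    (hv : HarmonicOnNhd v s) : HarmonicOnSet v s :=
  ⟨hv.contDiffOn, fun z hz => by
    rw [laplacianAt_eq_laplacian (hv z hz).1, (hv z hz).2.eq_of_nhds]; rfl⟩

theorem harmonicOnNhd_add_conj {f g : ℂ → ℂ} {s : Set ℂ} (hf : AnalyticOnNhd ℂ f s)
    (hg : AnalyticOnNhd ℂ g s) : HarmonicOnNhd (fun z => f z + conj (g z)) s :=
  fun z hz => (hf z hz).harmonicAt.add (hg z hz).harmonicAt_conj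

/-- The Dirichlet problem on the unit disc with rational boundary data
`P(z, z̄)/Q(z, z̄)` has an explicit solution of the form `p₁/q₁ + conj (p₂/q₂)` with
`q₁, q₂` nonvanishing on the closed unit disc: this function is continuous on the closed
disc, harmonic on the open disc, and has the prescribed boundary values. -/
theorem dirichlet_problem_rational_data
    (P Q : MvPolynomial (Fin 2) ℂ)
    (hQ : ∀ z : ℂ, ‖z‖ = 1 → MvPolynomial.eval ![z, conj z] Q ≠ 0) :
    ∃ p₁ q₁ p₂ q₂ : Polynomial ℂ,
      (∀ z : ℂ, ‖z‖ ≤ 1 → q₁.eval z ≠ 0 ∧ q₂.eval z ≠ 0) ∧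
      ContinuousOn (fun z : ℂ => p₁.eval z / q₁.eval z + conj (p₂.eval z / q₂.eval z))
        {z : ℂ | ‖z‖ ≤ 1} ∧
      HarmonicOnSet (fun z : ℂ => (p₁.eval z / q₁.eval z + conj (p₂.eval z / q₂.eval z)).re)
        {z : ℂ | ‖z‖ < 1} ∧
      HarmonicOnSet (fun z : ℂ => (p₁.eval z / q₁.eval z + conj (p₂.eval z / q₂.eval z)).im)
        {z : ℂ | ‖z‖ < 1} ∧
      ∀ z : ℂ, ‖z‖ = 1 →
        p₁.eval z / q₁.eval z + conj (p₂.eval z / q₂.eval z)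
          = MvPolynomial.eval ![z, conj z] P / MvPolynomial.eval ![z, conj z] Q := by
  obtain ⟨N, M, hNM⟩ := exists_eval_inv_div_eq P Q
  have hz0 : ∀ z : ℂ, ‖z‖ = 1 → z ≠ 0 := fun z hz => by rintro rfl; simp at hz
  have hM : ∀ z : ℂ, ‖z‖ = 1 → M.eval z ≠ 0 := fun z hz => by
    rw [Ne, (hNM z (hz0 z hz)).1, Complex.inv_eq_conj hz]
    exact hQ z hz
  obtain ⟨p₁, q₁, p₂, q₂, hq, hbd⟩ := exists_div_add_conj_div_eq_on_circle (N := N) hM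
  have hu : HarmonicOnNhd (fun z => p₁.eval z / q₁.eval z + conj (p₂.eval z / q₂.eval z))
      {z : ℂ | ‖z‖ ≤ 1} :=
    harmonicOnNhd_add_conj (analyticOnNhd_eval_div_eval fun z hz => (hq z hz).1)
      (analyticOnNhd_eval_div_eval fun z hz => (hq z hz).2)
  have hdisc : {z : ℂ | ‖z‖ < 1} ⊆ {z : ℂ | ‖z‖ ≤ 1} :=
    Set.ofPred_subset_ofPred.2 fun _ => le_of_lt
  refine ⟨p₁, q₁, p₂, q₂, hq, hu.continuousOn,
    ((hu.comp_CLM Complex.reCLM).mono hdisc).harmonicOnSet,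
    ((hu.comp_CLM Complex.imCLM).mono hdisc).harmonicOnSet, fun z hz => ?_⟩
  rw [hbd z hz, ← Complex.inv_eq_conj hz, (hNM z (hz0 z hz)).2]
end
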